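/- arXiv:math/0703378 — 2 statements merged into one kernel-verified Lean document; each statement's English description precedes it below -/
import Mathlib

section
/- Let r > 0 and x, y ≥ 0. If exp(−x/r) + exp(−y/r) ≥ 1, then x·y ≤ r². -/
theorem stmt_16 (r : ℝ) (hr : 0 < r) (x y : ℝ) (hx : 0 ≤ x) (hy : 0 ≤ y)
    (h : 1 ≤ Real.exp (-x / r) + Real.exp (-y / r)) :
    x * y ≤ r ^ 2 := by
  set a := x / r with ha
  set b := y / r with hb
  have hu : (0:ℝ) < Real.exp (-a) := Real.exp_pos _
  have hv : (0:ℝ) < Real.exp (-b) := Real.exp_pos _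
  have h1 : Real.exp (-a) * (1 + a) ≤ 1 := by
    have := Real.add_one_le_exp a
    calc Real.exp (-a) * (1 + a) ≤ Real.exp (-a) * Real.exp a := by nlinarith
      _ = 1 := by rw [← Real.exp_add]; simp
  have h2 : Real.exp (-b) * (1 + b) ≤ 1 := by
    have := Real.add_one_le_exp b
    calc Real.exp (-b) * (1 + b) ≤ Real.exp (-b) * Real.exp b := by nlinarith
      _ = 1 := by rw [← Real.exp_add]; simp
  have h' : 1 ≤ Real.exp (-a) + Real.exp (-b) := by
    rw [ha, hb, ← neg_div, ← neg_div]; exact h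
  have ha0 : 0 ≤ a := div_nonneg hx hr.le
  have hb0 : 0 ≤ b := div_nonneg hy hr.le
  have hA : Real.exp (-a) * a ≤ Real.exp (-b) := by nlinarith
  have hB : Real.exp (-b) * b ≤ Real.exp (-a) := by nlinarith
  have hab : a * b ≤ 1 := by
    nlinarith [mul_pos hu hv, mul_le_mul hA hB (by positivity) hv.le]
  have hx' : x = a * r := by rw [ha, div_mul_cancel₀ x hr.ne']
  have hy' : y = b * r := by rw [hb, div_mul_cancel₀ y hr.ne']
  rw [hx', hy']
  nlinarith [sq_nonneg r]
end

section
/- Let r > 0 and x, y ≥ 0. If log(1 + x)/log(1 + x + r) + log(1 + y)/log(1 + y + r) ≤ 1, then x·y ≤ r². -/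
theorem stmt_17 (r : ℝ) (hr : 0 < r) (x y : ℝ) (hx : 0 ≤ x) (hy : 0 ≤ y)
    (h : Real.log (1 + x) / Real.log (1 + x + r) +
         Real.log (1 + y) / Real.log (1 + y + r) ≤ 1) :
    x * y ≤ r ^ 2 := by
  set a := Real.log (1 + x) with ha
  set A := Real.log (1 + x + r) with hA
  set b := Real.log (1 + y) with hb
  set B := Real.log (1 + y + r) with hB
  have hx1 : (0:ℝ) < 1 + x := by linarith
  have hy1 : (0:ℝ) < 1 + y := by linarith
  have hA0 : 0 < A := Real.log_pos (by linarith)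
  have hB0 : 0 < B := Real.log_pos (by linarith)
  have ha0 : 0 ≤ a := Real.log_nonneg (by linarith)
  have hb0 : 0 ≤ b := Real.log_nonneg (by linarith)
  -- a ≤ A, b ≤ B
  have haA : a ≤ A := Real.log_le_log (by linarith) (by linarith)
  have hbB : b ≤ B := Real.log_le_log (by linarith) (by linarith)
  -- from h: a*B + b*A ≤ A*B
  have key : a * B + b * A ≤ A * B := by
    have := h
    rw [div_add_div _ _ (ne_of_gt hA0) (ne_of_gt hB0), div_le_one (by positivity)] at this
    linarith
  -- hence ab ≤ (A-a)(B-b)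
  have key2 : a * b ≤ (A - a) * (B - b) := by nlinarith
  -- lower bounds: x/(1+x) ≤ a
  have la : x / (1 + x) ≤ a := by
    have h1 : Real.log (1 + x)⁻¹ ≤ (1 + x)⁻¹ - 1 :=
      Real.log_le_sub_one_of_pos (by positivity)
    rw [Real.log_inv] at h1
    rw [ha, div_le_iff₀ hx1]
    have : (1 - (1+x)⁻¹) * (1+x) = x := by field_simp; ring
    nlinarith [mul_le_mul_of_nonneg_right (by linarith : 1 - (1+x)⁻¹ ≤ Real.log (1+x)) hx1.le]
  have lb : y / (1 + y) ≤ b := by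
    have h1 : Real.log (1 + y)⁻¹ ≤ (1 + y)⁻¹ - 1 :=
      Real.log_le_sub_one_of_pos (by positivity)
    rw [Real.log_inv] at h1
    rw [hb, div_le_iff₀ hy1]
    have : (1 - (1+y)⁻¹) * (1+y) = y := by field_simp; ring
    nlinarith [mul_le_mul_of_nonneg_right (by linarith : 1 - (1+y)⁻¹ ≤ Real.log (1+y)) hy1.le]
  -- upper bounds: A - a ≤ r/(1+x)
  have ua : A - a ≤ r / (1 + x) := by
    have : A - a = Real.log ((1 + x + r) / (1 + x)) := by
      rw [Real.log_div (by linarith) (ne_of_gt hx1)]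
    rw [this]
    have h1 : Real.log ((1 + x + r) / (1 + x)) ≤ (1 + x + r) / (1 + x) - 1 :=
      Real.log_le_sub_one_of_pos (by positivity)
    have h2 : (1 + x + r) / (1 + x) - 1 = r / (1 + x) := by field_simp; ring
    linarith
  have ub : B - b ≤ r / (1 + y) := by
    have : B - b = Real.log ((1 + y + r) / (1 + y)) := by
      rw [Real.log_div (by linarith) (ne_of_gt hy1)]
    rw [this]
    have h1 : Real.log ((1 + y + r) / (1 + y)) ≤ (1 + y + r) / (1 + y) - 1 :=
      Real.log_le_sub_one_of_pos (by positivity)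
    have h2 : (1 + y + r) / (1 + y) - 1 = r / (1 + y) := by field_simp; ring
    linarith
  -- combine
  have c1 : (x / (1 + x)) * (y / (1 + y)) ≤ a * b :=
    mul_le_mul la lb (by positivity) ha0
  have c2 : (A - a) * (B - b) ≤ (r / (1 + x)) * (r / (1 + y)) :=
    mul_le_mul ua ub (by linarith) (by positivity)
  have final : (x / (1 + x)) * (y / (1 + y)) ≤ (r / (1 + x)) * (r / (1 + y)) := by
    linarith
  rw [div_mul_div_comm, div_mul_div_comm, div_le_div_iff₀ (by positivity) (by positivity)] at final
  nlinarith [mul_pos hx1 hy1]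
end
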